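/- Let α be an irrational real number with continued fraction expansion [a_0; a_1, a_2, …] and convergents p_n/q_n, and let n ≥ 1. (i) If q_{n−1} is even, then the fraction p_{n−1}/(q_{n−1}/2) is a convergent of 2α. (ii) If q_{n−1} is odd and a_n ≥ 4, then the fraction 2p_{n−1}/q_{n−1} is a convergent of 2α. -/

import Mathlib

open Filter

/-- Partial quotients of the continued fraction expansion: `cfA α n` is `a_n(α)`. -/
noncomputable def cfA : ℝ → ℕ → ℤ
  | α, 0 => ⌊α⌋
  | α, n + 1 => cfA (Int.fract α)⁻¹ n

/-- `M(α) = sup_{n ≥ 1} a_n(α)` as an element of `ℕ∞`. -/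
noncomputable def Mq (α : ℝ) : ℕ∞ := ⨆ n : ℕ, ((cfA α (n + 1)).toNat : ℕ∞)

/-- `B(α) = limsup_{n → ∞} a_n(α)` as an element of `ℕ∞`. -/
noncomputable def Bq (α : ℝ) : ℕ∞ := limsup (fun n => ((cfA α n).toNat : ℕ∞)) atTop

/-- Distance from a real number to the nearest integer. -/
noncomputable def nearestDist (x : ℝ) : ℝ := |x - round x|

/-- Complete quotients of the continued fraction expansion. -/
noncomputable def cq (α : ℝ) : ℕ → ℝ
  | 0 => α
  | n + 1 => (Int.fract (cq α n))⁻¹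

/-- Shifted convergent numerators: `cfP α (n+1) = p_n`, `cfP α 0 = p_{-1} = 1`. -/
noncomputable def cfP (α : ℝ) : ℕ → ℤ
  | 0 => 1
  | 1 => ⌊α⌋
  | n + 2 => cfA α (n + 1) * cfP α (n + 1) + cfP α n

/-- Shifted convergent denominators: `cfQ α (n+1) = q_n`, `cfQ α 0 = q_{-1} = 0`. -/
noncomputable def cfQ (α : ℝ) : ℕ → ℤ
  | 0 => 0
  | 1 => 1
  | n + 2 => cfA α (n + 1) * cfQ α (n + 1) + cfQ α n

/-- Two reals are equivalent if related by an integer Möbius map of determinant `±1`. -/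
def CfEquiv (x y : ℝ) : Prop :=
  ∃ a b c d : ℤ, (a * d - b * c = 1 ∨ a * d - b * c = -1) ∧
    y = ((a : ℝ) * x + b) / ((c : ℝ) * x + d)

/-! The convergent `p/q = p_{n-1}/q_{n-1}` of `α` satisfies `|α - p/q| < 1/(a_n q²)`, hence
`|2α - 2p/q| < 2/(a_n q²)`. If `q = 2c` is even, `2p/q = p/c` is in lowest terms and
`2/(a_n q²) ≤ 1/(2c²)`; if `q` is odd, `2p/q` is in lowest terms and `a_n ≥ 4` gives
`2/(a_n q²) ≤ 1/(2q²)`. In both cases Legendre's theorem makes the fraction a convergent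
of `2α`. -/

section ContinuedFraction

variable {α : ℝ}

lemma cq_succ_eq_cq_inv_fract (α : ℝ) (n : ℕ) : cq α (n + 1) = cq (Int.fract α)⁻¹ n := by
  induction n with
  | zero => rfl
  | succ n ih => rw [cq, ih, cq]

lemma cfA_eq_floor_cq : ∀ (α : ℝ) (n : ℕ), cfA α n = ⌊cq α n⌋
  | _, 0 => rfl
  | α, n + 1 => by rw [cfA, cfA_eq_floor_cq, cq_succ_eq_cq_inv_fract]

lemma cq_eq_cfA_add_inv_cq_succ (α : ℝ) (n : ℕ) :
    cq α n = cfA α n + (cq α (n + 1))⁻¹ := by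
  rw [cq, inv_inv, cfA_eq_floor_cq, Int.floor_add_fract]

lemma Irrational.cq (h : Irrational α) : ∀ n, Irrational (cq α n)
  | 0 => h
  | n + 1 => ((h.cq n).sub_intCast _).inv

lemma cfA_lt_cq (h : Irrational α) (n : ℕ) : (cfA α n : ℝ) < cq α n := by
  rw [cfA_eq_floor_cq]
  exact (Int.floor_le _).lt_of_ne fun he => (h.cq n).ne_int _ he.symm

lemma one_lt_cq_succ (h : Irrational α) (n : ℕ) : 1 < cq α (n + 1) := by
  have hfract : 0 < Int.fract (cq α n) := Int.fract_pos.2 ((h.cq n).ne_int _)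
  exact one_lt_inv_iff₀.2 ⟨hfract, Int.fract_lt_one _⟩

lemma one_le_cfA_succ (h : Irrational α) (n : ℕ) : 1 ≤ cfA α (n + 1) := by
  rw [cfA_eq_floor_cq]
  exact Int.le_floor.2 (by exact_mod_cast (one_lt_cq_succ h n).le)

lemma one_le_cfQ_succ (h : Irrational α) : ∀ n, 1 ≤ cfQ α (n + 1)
  | 0 => le_rfl
  | 1 => by simpa [cfQ] using one_le_cfA_succ h 0
  | n + 2 => by
    have := one_le_cfA_succ h (n + 1)
    have := one_le_cfQ_succ h (n + 1)
    have := one_le_cfQ_succ h n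
    rw [cfQ.eq_3]
    nlinarith

lemma cfQ_nonneg (h : Irrational α) : ∀ n, 0 ≤ cfQ α n
  | 0 => le_rfl
  | n + 1 => zero_le_one.trans (one_le_cfQ_succ h n)

lemma cf_determinant (α : ℝ) (n : ℕ) :
    cfP α (n + 1) * cfQ α n - cfP α n * cfQ α (n + 1) = (-1) ^ (n + 1) := by
  induction n with
  | zero => simp [cfP, cfQ]
  | succ n ih =>
    rw [cfP, cfQ, pow_succ]
    linear_combination (-1 : ℤ) * ih

lemma isCoprime_cfP_cfQ (α : ℝ) (n : ℕ) : IsCoprime (cfP α (n + 1)) (cfQ α (n + 1)) := by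
  refine ⟨(-1) ^ (n + 1) * cfQ α n, -((-1) ^ (n + 1) * cfP α n), ?_⟩
  have hsq : ((-1 : ℤ) ^ (n + 1)) ^ 2 = 1 := by rw [← pow_mul, mul_comm, pow_mul]; simp
  linear_combination (-1 : ℤ) ^ (n + 1) * cf_determinant α n + hsq

lemma mul_cq_mul_cfQ_add_cfQ_eq (h : Irrational α) (k : ℕ) :
    α * (cq α (k + 1) * cfQ α (k + 1) + cfQ α k) =
      cq α (k + 1) * cfP α (k + 1) + cfP α k := by
  induction k with
  | zero =>
    have hx : cq α 1 ≠ 0 := (one_pos.trans (one_lt_cq_succ h 0)).ne'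
    have hα : α = ⌊α⌋ + (cq α 1)⁻¹ := cq_eq_cfA_add_inv_cq_succ α 0
    simp only [cfP, cfQ, Int.cast_one, Int.cast_zero, mul_one, add_zero]
    linear_combination cq α 1 * hα + mul_inv_cancel₀ hx
  | succ k ih =>
    set x := cq α (k + 1)
    set y := cq α (k + 2)
    have hy : y ≠ 0 := (one_pos.trans (one_lt_cq_succ h (k + 1))).ne'
    have hx : x = cfA α (k + 1) + y⁻¹ := cq_eq_cfA_add_inv_cq_succ α (k + 1)
    have hxy : y * x = cfA α (k + 1) * y + 1 := by
      rw [hx, mul_add, mul_inv_cancel₀ hy, mul_comm]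
    rw [cfP.eq_3, cfQ.eq_3]
    push_cast
    linear_combination y * ih - (α * cfQ α (k + 1) - cfP α (k + 1)) * hxy

lemma cf_error_mul_eq_neg_one_pow (h : Irrational α) (k : ℕ) :
    (α * cfQ α (k + 1) - cfP α (k + 1)) * (cq α (k + 1) * cfQ α (k + 1) + cfQ α k)
      = (-1) ^ k := by
  have hdet : (cfP α (k + 1) * cfQ α k - cfP α k * cfQ α (k + 1) : ℝ) = (-1) ^ (k + 1) := by
    exact_mod_cast cf_determinant α k
  rw [pow_succ] at hdet
  linear_combination (cfQ α (k + 1) : ℝ) * mul_cq_mul_cfQ_add_cfQ_eq h k - hdet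

lemma abs_sub_cfP_div_cfQ_lt (h : Irrational α) (k : ℕ) :
    |α - cfP α (k + 1) / cfQ α (k + 1)| < 1 / (cfA α (k + 1) * cfQ α (k + 1) ^ 2) := by
  have hQ : (1 : ℝ) ≤ cfQ α (k + 1) := by exact_mod_cast one_le_cfQ_succ h k
  have ha : (1 : ℝ) ≤ cfA α (k + 1) := by exact_mod_cast one_le_cfA_succ h k
  have hQ' : (0 : ℝ) ≤ cfQ α k := by exact_mod_cast cfQ_nonneg h k
  have hD : cfA α (k + 1) * cfQ α (k + 1) < cq α (k + 1) * cfQ α (k + 1) + cfQ α k := by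
    nlinarith [cfA_lt_cq h (k + 1)]
  have herr := congrArg (|·|) (cf_error_mul_eq_neg_one_pow h k)
  rw [abs_mul, abs_of_pos (hD.trans_le' (by positivity)), abs_pow, abs_neg, abs_one,
    one_pow] at herr
  have hsplit : α - cfP α (k + 1) / cfQ α (k + 1)
      = (α * cfQ α (k + 1) - cfP α (k + 1)) / cfQ α (k + 1) := by
    field_simp
  rw [hsplit, abs_div, abs_of_pos (show (0 : ℝ) < cfQ α (k + 1) by linarith),
    div_lt_div_iff₀ (by linarith) (by positivity)]
  have herr_pos : 0 < |α * cfQ α (k + 1) - cfP α (k + 1)| :=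
    abs_pos.2 fun he => by simp [he] at herr
  have hlt := mul_lt_mul_of_pos_left hD herr_pos
  rw [herr] at hlt
  nlinarith

lemma cfQ_succ_eq_cfP_inv_fract (α : ℝ) : ∀ m, cfQ α (m + 1) = cfP (Int.fract α)⁻¹ m
  | 0 => rfl
  | 1 => by simp [cfQ, cfP, cfA]
  | m + 2 => by
    rw [cfQ.eq_3, cfP.eq_3, cfQ_succ_eq_cfP_inv_fract α (m + 1), cfQ_succ_eq_cfP_inv_fract α m]
    rfl

lemma cfP_succ_eq_floor_mul_add (α : ℝ) :
    ∀ m, cfP α (m + 1) = ⌊α⌋ * cfP (Int.fract α)⁻¹ m + cfQ (Int.fract α)⁻¹ m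
  | 0 => by simp [cfP, cfQ]
  | 1 => by simp [cfQ, cfP, cfA]; ring
  | m + 2 => by
    rw [cfP.eq_3 α (m + 1), cfP.eq_3 (Int.fract α)⁻¹ m, cfQ.eq_3 (Int.fract α)⁻¹ m,
      cfP_succ_eq_floor_mul_add α (m + 1), cfP_succ_eq_floor_mul_add α m, cfA]
    ring

lemma cfP_div_cfQ_eq_convergent (h : Irrational α) (m : ℕ) :
    (cfP α (m + 1) / cfQ α (m + 1) : ℝ) = α.convergent m := by
  induction m generalizing α with
  | zero => simp [cfP, cfQ]
  | succ m ih =>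
    have hβ : Irrational (Int.fract α)⁻¹ := (h.sub_intCast ⌊α⌋).inv
    have hP : (cfP (Int.fract α)⁻¹ (m + 1) : ℝ) ≠ 0 := by
      rw [← cfQ_succ_eq_cfP_inv_fract]
      exact_mod_cast (one_pos.trans_le (one_le_cfQ_succ h (m + 1))).ne'
    rw [cfP_succ_eq_floor_mul_add α (m + 1), cfQ_succ_eq_cfP_inv_fract α (m + 1),
      Real.convergent_succ, Rat.cast_add, Rat.cast_intCast, Rat.cast_inv, ← ih hβ]
    push_cast
    rw [inv_div, add_div, mul_div_cancel_right₀ _ hP]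

lemma exists_cfP_div_cfQ_eq_of_abs_sub_lt (h : Irrational α) {p q : ℤ} (hq : 0 < q)
    (hpq : IsCoprime p q) (hlt : |α - p / q| < 1 / (2 * q ^ 2)) :
    ∃ m, (cfP α (m + 1) / cfQ α (m + 1) : ℝ) = p / q := by
  have hden : ((p / q : ℚ).den : ℤ) = q :=
    Rat.den_div_eq_of_coprime hq (Int.isCoprime_iff_gcd_eq_one.1 hpq)
  obtain ⟨m, hm⟩ := Real.exists_rat_eq_convergent (q := p / q) (by
    rw [← Int.cast_natCast, hden]
    push_cast
    exact hlt)
  refine ⟨m, ?_⟩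
  rw [cfP_div_cfQ_eq_convergent h m, ← hm]
  push_cast
  rfl

end ContinuedFraction

/-- For irrational `α` with convergents `p_n/q_n` (here `cfP α (n+1) = p_n` and
`cfQ α (n+1) = q_n`) and `n ≥ 1`: (i) if `q_{n-1}` is even then `p_{n-1}/(q_{n-1}/2)` is a
convergent of `2α`; (ii) if `q_{n-1}` is odd and `a_n ≥ 4` then `2p_{n-1}/q_{n-1}` is a
convergent of `2α`. -/
theorem stmt7 (α : ℝ) (hα : Irrational α) (n : ℕ) (hn : 1 ≤ n) :
    (Even (cfQ α n) →
      ∃ m : ℕ, ((cfP (2 * α) (m + 1) : ℝ) / (cfQ (2 * α) (m + 1) : ℝ)) =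
        (cfP α n : ℝ) / ((cfQ α n : ℝ) / 2)) ∧
    (Odd (cfQ α n) → 4 ≤ cfA α n →
      ∃ m : ℕ, ((cfP (2 * α) (m + 1) : ℝ) / (cfQ (2 * α) (m + 1) : ℝ)) =
        (2 * (cfP α n : ℝ)) / (cfQ α n : ℝ)) := by
  obtain ⟨k, rfl⟩ : ∃ k, n = k + 1 := ⟨n - 1, by omega⟩
  have h2α : Irrational (2 * α) := by simpa using hα.natCast_mul two_ne_zero
  set P := cfP α (k + 1)
  set Q := cfQ α (k + 1)
  have hQ : 0 < Q := one_pos.trans_le (one_le_cfQ_succ hα k)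
  have hclose (t : ℝ) (ht : 0 < t) (hta : t ≤ cfA α (k + 1)) :
      |2 * α - 2 * P / Q| < 2 / (t * Q ^ 2) := by
    rw [mul_div_assoc, ← mul_sub, abs_mul, abs_two]
    calc 2 * |α - P / Q| < 2 * (1 / (cfA α (k + 1) * Q ^ 2)) := by
          gcongr; exact abs_sub_cfP_div_cfQ_lt hα k
      _ ≤ 2 / (t * Q ^ 2) := by
          rw [mul_one_div]; gcongr
  constructor
  · rintro ⟨c, hc⟩
    have hcQ : (Q : ℝ) / 2 = c := by rw [hc]; push_cast; ring
    rw [hcQ]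
    refine exists_cfP_div_cfQ_eq_of_abs_sub_lt h2α (by omega)
      ((isCoprime_cfP_cfQ α k).of_isCoprime_of_dvd_right ⟨2, by omega⟩) ?_
    calc |2 * α - P / (c : ℤ)| = |2 * α - 2 * P / Q| := by
          rw [← hcQ, div_div_eq_mul_div, mul_comm (P : ℝ)]
      _ < 2 / (1 * Q ^ 2) := hclose 1 one_pos (by exact_mod_cast one_le_cfA_succ hα k)
      _ = 1 / (2 * (c : ℤ) ^ 2) := by rw [← hcQ]; ring
  · rintro ⟨c, hc⟩ ha
    have hcop : IsCoprime (2 * P) Q :=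
      IsCoprime.mul_left ⟨-c, 1, by omega⟩ (isCoprime_cfP_cfQ α k)
    have hlt : |2 * α - (2 * P : ℤ) / Q| < 1 / (2 * Q ^ 2) := by
      push_cast
      convert hclose 4 four_pos (by exact_mod_cast ha) using 1
      ring
    exact_mod_cast exists_cfP_div_cfQ_eq_of_abs_sub_lt h2α hQ hcop hlt
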